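/- Let ΔT, T_C > 0. Define f(x, y) = (ΔT/(2T_C))·x - x²/y² and g(y) = y - y². Then max over {(x, y) : 0 ≤ x ≤ g(y), 0 < y ≤ 1} of f(x, y) equals ΔT²/(8·T_C·(T_C + T_H)) where T_H = T_C + ΔT. Moreover the unconstrained maximizer x*(y) = (ΔT/(4T_C))·y² satisfies x*(y) ≤ g(y) if and only if y ≤ y_0 := 1/(1 + ΔT/(4T_C)). -/

import Mathlib

/-!
With `a = ΔT/(4T_C)` the objective is `2a x - x²/y²`. Substituting `t = x/y`, the constraint
`x ≤ y - y²` becomes `y ≤ 1 - t`, so the objective `2a t y - t²` is at most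
`2a t (1 - t) - t² = 2a t - (2a + 1) t²`, a concave quadratic in `t` with maximum `a²/(2a + 1)`,
attained at `t = a/(2a + 1)`, `y = 1 - t`.
-/

lemma mul_sub_mul_sq_le_sq_div {b c : ℝ} (hc : 0 < c) (t : ℝ) :
    b * t - c * t ^ 2 ≤ b ^ 2 / (4 * c) := by
  rw [le_div_iff₀ (by positivity)]
  nlinarith [sq_nonneg (b - 2 * c * t)]

lemma mul_sq_le_sub_sq_iff {a y : ℝ} (ha : 0 < 1 + a) (hy : 0 < y) :
    a * y ^ 2 ≤ y - y ^ 2 ↔ y ≤ 1 / (1 + a) := by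
  rw [le_div_iff₀ ha]
  constructor
  · intro h
    nlinarith
  · intro h
    nlinarith [mul_pos hy hy]

lemma two_mul_mul_sub_sq_div_sq_le {a x y : ℝ} (ha : 0 ≤ a) (hx : 0 ≤ x) (hxy : x ≤ y - y ^ 2)
    (hy : 0 < y) : 2 * a * x - x ^ 2 / y ^ 2 ≤ a ^ 2 / (2 * a + 1) := by
  set t := x / y with ht
  have ht0 : 0 ≤ t := div_nonneg hx hy.le
  have hty : y ≤ 1 - t := by
    rw [ht, le_sub_iff_add_le, ← le_sub_iff_add_le', div_le_iff₀ hy]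
    nlinarith
  have hobj : 2 * a * x - x ^ 2 / y ^ 2 = 2 * a * t * y - t ^ 2 := by
    rw [ht]
    field_simp
  calc 2 * a * x - x ^ 2 / y ^ 2 = 2 * a * t * y - t ^ 2 := hobj
    _ ≤ 2 * a * t * (1 - t) - t ^ 2 := by gcongr
    _ = 2 * a * t - (2 * a + 1) * t ^ 2 := by ring
    _ ≤ (2 * a) ^ 2 / (4 * (2 * a + 1)) := mul_sub_mul_sq_le_sq_div (by linarith) t
    _ = a ^ 2 / (2 * a + 1) := by
      field_simp
      ring

lemma isGreatest_two_mul_mul_sub_sq_div_sq {a : ℝ} (ha : 0 ≤ a) :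
    IsGreatest
      {p : ℝ | ∃ x y : ℝ, 0 ≤ x ∧ x ≤ y - y ^ 2 ∧ 0 < y ∧ y ≤ 1 ∧
        p = 2 * a * x - x ^ 2 / y ^ 2}
      (a ^ 2 / (2 * a + 1)) := by
  have hden : 0 < 2 * a + 1 := by linarith
  refine ⟨⟨a * (a + 1) / (2 * a + 1) ^ 2, (a + 1) / (2 * a + 1), by positivity, ?_, by positivity,
    ?_, ?_⟩, ?_⟩
  · apply le_of_eq
    field_simp
    ring
  · rw [div_le_one hden]
    linarith
  · field_simp
    ring
  · rintro p ⟨x, y, hx, hxy, hy, -, rfl⟩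
    exact two_mul_mul_sub_sq_div_sq_le ha hx hxy hy

/-- Dimensionless optimization in the lower power bound: the constrained maximum of
`f(x,y) = (ΔT/(2T_C))x - x²/y²` over `0 ≤ x ≤ y - y²`, `0 < y ≤ 1` equals
`ΔT²/(8T_C(T_C+T_H))` with `T_H = T_C + ΔT`; the unconstrained maximizer
`x*(y) = (ΔT/(4T_C))y²` is feasible iff `y ≤ 1/(1 + ΔT/(4T_C))`. -/
theorem dimensionless_power_max
    (ΔT TC TH : ℝ) (hΔT : 0 < ΔT) (hTC : 0 < TC) (hTH : TH = TC + ΔT) :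
    IsGreatest
      {p : ℝ | ∃ x y : ℝ, 0 ≤ x ∧ x ≤ y - y ^ 2 ∧ 0 < y ∧ y ≤ 1 ∧
        p = (ΔT / (2 * TC)) * x - x ^ 2 / y ^ 2}
      (ΔT ^ 2 / (8 * TC * (TC + TH))) ∧
    (∀ y : ℝ, 0 < y → y ≤ 1 →
      ((ΔT / (4 * TC)) * y ^ 2 ≤ y - y ^ 2 ↔ y ≤ 1 / (1 + ΔT / (4 * TC)))) := by
  set a := ΔT / (4 * TC) with ha
  have ha0 : 0 < a := by positivity
  have hΔT_eq : ΔT = 4 * TC * a := by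
    rw [ha]
    field_simp
  have hslope : ΔT / (2 * TC) = 2 * a := by
    rw [hΔT_eq]
    field_simp
    ring
  have hmax : ΔT ^ 2 / (8 * TC * (TC + TH)) = a ^ 2 / (2 * a + 1) := by
    rw [hTH, hΔT_eq]
    field_simp
    ring
  rw [hslope, hmax]
  exact ⟨isGreatest_two_mul_mul_sub_sq_div_sq ha0.le,
    fun y hy _ => mul_sq_le_sub_sq_iff (by linarith) hy⟩
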